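/- Let W_n be defined recursively by W_1 = Z₂ and W_{n+1} = W_n ≀ Z₂, and let k_n denote the number of conjugacy classes of W_n. Then k_1 = 2 and k_{n+1} = 2k_n + C(k_n, 2) = (k_n² + 3k_n)/2 for all n ≥ 1. -/

import Mathlib

/-!
Conjugating `⟨(a, b), z⟩ ∈ G ≀ Z₂` by the base group `G × G` conjugates the coordinates
independently when `z = 1`, and by the generator of `Z₂` swaps them. So the classes over `1` are
the unordered pairs of classes of `G`, of which there are `C(k + 1, 2) = k + C(k, 2)`. Over the
generator, `⟨(a, b), flip⟩` is conjugate to `⟨(a * b, 1), flip⟩`, and the class of `a * b` in `G`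
is a complete invariant, giving `k` further classes.
-/

/-- The swap automorphism of `G × G`. -/
def swapAut (G : Type*) [Group G] : MulAut (G × G) := MulEquiv.prodComm

lemma swapAut_sq (G : Type*) [Group G] : swapAut G * swapAut G = 1 := by
  apply MulEquiv.ext; intro x; rfl

/-- The action of `Z₂` on `G × G` by swapping coordinates:
the nontrivial element of `Z₂` acts by `(a, b) ↦ (b, a)`. -/
def wreathAction (G : Type*) [Group G] : Multiplicative (ZMod 2) →* MulAut (G × G) :=
  AddMonoidHom.toMultiplicativeLeft
    (ZMod.lift 2 ⟨zmultiplesHom (Additive (MulAut (G × G))) (Additive.ofMul (swapAut G)), by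
      show ((2 : ℤ)) • Additive.ofMul (swapAut G) = 0
      rw [show ((2:ℤ) • Additive.ofMul (swapAut G)) = Additive.ofMul (swapAut G ^ (2:ℤ)) from rfl]
      rw [show ((2:ℤ)) = ((2:ℕ) : ℤ) from rfl, zpow_natCast, pow_two, swapAut_sq]
      rfl⟩)

/-- The wreath product `G ≀ Z₂ = (G × G) ⋊ Z₂`, where the nontrivial element of `Z₂`
acts on `G × G` by swapping the two coordinates.  An element `(a, b, z)` of the paper
is the term `⟨(a, b), z⟩`. -/
abbrev WreathZ2 (G : Type*) [Group G] :=
  SemidirectProduct (G × G) (Multiplicative (ZMod 2)) (wreathAction G)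

/-- The iterated wreath product: `IterWreath 0 = W₁ = Z₂` and
`IterWreath (n+1) = W_{n+2} = W_{n+1} ≀ Z₂`, so `IterWreath n` is the group `W_{n+1}`
of the paper. -/
def IterWreath : ℕ → GrpCat
  | 0 => GrpCat.of (Multiplicative (ZMod 2))
  | (n + 1) => GrpCat.of (WreathZ2 (IterWreath n))

/-- `k_n`, the number of conjugacy classes of `W_n = IterWreath (n - 1)`
(equivalently, its number of irreducible complex representations). -/
noncomputable def kSeq (n : ℕ) : ℕ := Nat.card (ConjClasses (IterWreath (n - 1)))

lemma ConjClasses.mk_conj {α : Type*} [Group α] (c a : α) :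
    ConjClasses.mk (c * a * c⁻¹) = ConjClasses.mk a :=
  ConjClasses.mk_eq_mk_iff_isConj.2 (isConj_iff.2 ⟨c⁻¹, by group⟩)

namespace WreathZ2

open SemidirectProduct

def flip : Multiplicative (ZMod 2) := Multiplicative.ofAdd 1

lemma eq_one_or_eq_flip : ∀ z : Multiplicative (ZMod 2), z = 1 ∨ z = flip := by decide

lemma flip_ne_one : flip ≠ 1 := by decide

variable {G : Type*} [Group G]

@[simp]
lemma wreathAction_one_apply (p : G × G) : wreathAction G 1 p = p := by
  rw [map_one, MulAut.one_apply]

@[simp]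
lemma wreathAction_flip_apply (p : G × G) : wreathAction G flip p = p.swap := rfl

instance [Finite G] : Finite (WreathZ2 G) := Finite.of_equiv _ equivProd.symm

lemma inl_conj_mk_one (u v a b : G) :
    (inl (u, v) * ⟨(a, b), 1⟩ * (inl (u, v))⁻¹ : WreathZ2 G) =
      ⟨(u * a * u⁻¹, v * b * v⁻¹), 1⟩ := by
  ext <;> simp [mul_left, mul_right, inv_left, inv_right]

lemma inl_conj_mk_flip (u v a b : G) :
    (inl (u, v) * ⟨(a, b), flip⟩ * (inl (u, v))⁻¹ : WreathZ2 G) =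
      ⟨(u * a * v⁻¹, v * b * u⁻¹), flip⟩ := by
  ext <;> simp [mul_left, mul_right, inv_left, inv_right]

lemma inr_flip_conj_mk (a b : G) (z : Multiplicative (ZMod 2)) :
    (inr flip * ⟨(a, b), z⟩ * (inr flip)⁻¹ : WreathZ2 G) = ⟨(b, a), z⟩ := by
  ext <;> simp [mul_left, mul_right, inv_left, inv_right]

noncomputable def conjInvariant (g : WreathZ2 G) : Sym2 (ConjClasses G) ⊕ ConjClasses G :=
  if g.right = 1 then .inl s(.mk g.left.1, .mk g.left.2) else .inr (.mk (g.left.1 * g.left.2))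

@[simp]
lemma conjInvariant_mk_one (a b : G) :
    conjInvariant (⟨(a, b), 1⟩ : WreathZ2 G) = .inl s(.mk a, .mk b) := by
  simp [conjInvariant]

@[simp]
lemma conjInvariant_mk_flip (a b : G) :
    conjInvariant (⟨(a, b), flip⟩ : WreathZ2 G) = .inr (.mk (a * b)) := by
  simp [conjInvariant, flip_ne_one]

lemma conjInvariant_inl_conj (n : G × G) (g : WreathZ2 G) :
    conjInvariant (inl n * g * (inl n)⁻¹) = conjInvariant g := by
  obtain ⟨u, v⟩ := n
  obtain ⟨⟨a, b⟩, z⟩ := g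
  rcases eq_one_or_eq_flip z with rfl | rfl
  · rw [inl_conj_mk_one, conjInvariant_mk_one, conjInvariant_mk_one, ConjClasses.mk_conj,
      ConjClasses.mk_conj]
  · rw [inl_conj_mk_flip, conjInvariant_mk_flip, conjInvariant_mk_flip,
      show u * a * v⁻¹ * (v * b * u⁻¹) = u * (a * b) * u⁻¹ by group, ConjClasses.mk_conj]

lemma conjInvariant_inr_conj (w : Multiplicative (ZMod 2)) (g : WreathZ2 G) :
    conjInvariant (inr w * g * (inr w)⁻¹) = conjInvariant g := by
  obtain ⟨⟨a, b⟩, z⟩ := g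
  rcases eq_one_or_eq_flip w with rfl | rfl
  · simp
  rw [inr_flip_conj_mk]
  rcases eq_one_or_eq_flip z with rfl | rfl
  · rw [conjInvariant_mk_one, conjInvariant_mk_one, Sym2.eq_swap]
  · rw [conjInvariant_mk_flip, conjInvariant_mk_flip,
      show b * a = b * (a * b) * b⁻¹ by group, ConjClasses.mk_conj]

lemma conjInvariant_conj (c g : WreathZ2 G) : conjInvariant (c * g * c⁻¹) = conjInvariant g := by
  have hc : c * g * c⁻¹ =
      inl c.left * (inr c.right * g * (inr c.right)⁻¹) * (inl c.left)⁻¹ := by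
    conv_lhs => rw [← inl_left_mul_inr_right c]
    group
  rw [hc, conjInvariant_inl_conj, conjInvariant_inr_conj]

lemma isConj_mk_one_of_isConj {a a' b b' : G} (ha : IsConj a a') (hb : IsConj b b') :
    IsConj (⟨(a, b), 1⟩ : WreathZ2 G) ⟨(a', b'), 1⟩ := by
  obtain ⟨u, rfl⟩ := isConj_iff.1 ha
  obtain ⟨v, rfl⟩ := isConj_iff.1 hb
  exact isConj_iff.2 ⟨inl (u, v), inl_conj_mk_one u v a b⟩

lemma isConj_mk_swap (a b : G) (z : Multiplicative (ZMod 2)) :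
    IsConj (⟨(a, b), z⟩ : WreathZ2 G) ⟨(b, a), z⟩ :=
  isConj_iff.2 ⟨inr flip, inr_flip_conj_mk a b z⟩

lemma isConj_mk_flip_mul (a b : G) :
    IsConj (⟨(a, b), flip⟩ : WreathZ2 G) ⟨(a * b, 1), flip⟩ :=
  isConj_iff.2 ⟨inl (1, b⁻¹), by rw [inl_conj_mk_flip]; group⟩

lemma isConj_mk_flip_of_isConj {a a' : G} (h : IsConj a a') :
    IsConj (⟨(a, 1), flip⟩ : WreathZ2 G) ⟨(a', 1), flip⟩ := by
  obtain ⟨u, rfl⟩ := isConj_iff.1 h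
  exact isConj_iff.2 ⟨inl (u, u), by rw [inl_conj_mk_flip]; group⟩

lemma isConj_of_conjInvariant_eq {g g' : WreathZ2 G} (h : conjInvariant g = conjInvariant g') :
    IsConj g g' := by
  obtain ⟨⟨a, b⟩, z⟩ := g
  obtain ⟨⟨a', b'⟩, z'⟩ := g'
  rcases eq_one_or_eq_flip z with rfl | rfl <;> rcases eq_one_or_eq_flip z' with rfl | rfl <;>
    simp only [conjInvariant_mk_one, conjInvariant_mk_flip, reduceCtorEq, Sum.inl.injEq,
      Sum.inr.injEq, Sym2.eq_iff, ConjClasses.mk_eq_mk_iff_isConj] at h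
  · rcases h with ⟨ha, hb⟩ | ⟨ha, hb⟩
    · exact isConj_mk_one_of_isConj ha hb
    · exact (isConj_mk_swap a b 1).trans (isConj_mk_one_of_isConj hb ha)
  · exact ((isConj_mk_flip_mul a b).trans (isConj_mk_flip_of_isConj h)).trans
      (isConj_mk_flip_mul a' b').symm

lemma conjInvariant_surjective : Function.Surjective (conjInvariant (G := G)) := by
  rintro (s | c)
  · induction s using Sym2.ind with
    | _ x y =>
      obtain ⟨a, rfl⟩ := ConjClasses.mk_surjective x
      obtain ⟨b, rfl⟩ := ConjClasses.mk_surjective y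
      exact ⟨⟨(a, b), 1⟩, conjInvariant_mk_one a b⟩
  · obtain ⟨a, rfl⟩ := ConjClasses.mk_surjective c
    exact ⟨⟨(a, 1), flip⟩, by rw [conjInvariant_mk_flip, mul_one]⟩

noncomputable def conjClassesEquiv :
    ConjClasses (WreathZ2 G) ≃ Sym2 (ConjClasses G) ⊕ ConjClasses G :=
  Equiv.ofBijective
    (Quotient.lift conjInvariant fun g g' h => by
      obtain ⟨c, rfl⟩ := isConj_iff.1 h
      exact (conjInvariant_conj c g).symm)
    ⟨fun x y => Quotient.inductionOn₂ x y fun _ _ h =>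
        Quotient.sound (isConj_of_conjInvariant_eq h),
      fun s => let ⟨g, hg⟩ := conjInvariant_surjective s; ⟨ConjClasses.mk g, hg⟩⟩

theorem card_conjClasses [Finite G] :
    Nat.card (ConjClasses (WreathZ2 G)) =
      2 * Nat.card (ConjClasses G) + (Nat.card (ConjClasses G)).choose 2 := by
  rw [Nat.card_congr conjClassesEquiv, Nat.card_sum, Sym2.natCard, Nat.choose_succ_succ,
    Nat.choose_one_right]
  ring

end WreathZ2

instance finite_iterWreath : ∀ n, Finite (IterWreath n)
  | 0 => inferInstanceAs (Finite (Multiplicative (ZMod 2)))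
  | n + 1 =>
    have := finite_iterWreath n
    inferInstanceAs (Finite (WreathZ2 (IterWreath n)))

/-- `k₁ = 2` and `k_{n+1} = 2 k_n + C(k_n, 2)` for all `n ≥ 1`. -/
theorem kSeq_one_and_recurrence :
    kSeq 1 = 2 ∧ ∀ n : ℕ, 1 ≤ n → kSeq (n + 1) = 2 * kSeq n + (kSeq n).choose 2 := by
  refine ⟨?_, fun n hn => ?_⟩
  · show Nat.card (ConjClasses (Multiplicative (ZMod 2))) = 2
    rw [← Nat.card_congr ConjClasses.mkEquiv]
    simp
  · obtain ⟨m, rfl⟩ := Nat.exists_eq_add_of_le' hn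
    exact WreathZ2.card_conjClasses
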